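/- The map h(x) = ((4-|x|²)/(|x|²+4x₂+4), 4x₁/(|x|²+4x₂+4)) is an isometry from the Finsler–Poincaré upper half plane (H, F_H) to the Finsler–Poincaré disk (D, F_P): for all x ∈ H and v ∈ ℝ², F_H(x,v) = F_P(h(x), Dh_x(v)). -/

import Mathlib

noncomputable section

/-- The Euclidean plane. -/
abbrev E2 := EuclideanSpace ℝ (Fin 2)

/-- The open unit disk. -/
def Dset : Set E2 := {x | ‖x‖ < 1}

/-- The upper half plane. -/
def Hset : Set E2 := {x | x 1 > 0}

/-- h(x) = ((4-|x|²)/(|x|²+4x₂+4), 4x₁/(|x|²+4x₂+4)). -/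
def hHP (x : E2) : E2 := !₂[(4 - ‖x‖ ^ 2) / (‖x‖ ^ 2 + 4 * x 1 + 4), 4 * x 0 / (‖x‖ ^ 2 + 4 * x 1 + 4)]

/-- w(x) = (2x₁x₂, x₂²-x₁²-4). -/
def wH (x : E2) : E2 := !₂[2 * x 0 * x 1, x 1 ^ 2 - x 0 ^ 2 - 4]

/-- The Finsler-Poincaré metric on the upper half plane. -/
def FH (x v : E2) : ℝ := ‖v‖ / x 1 + (inner ℝ (wH x) v : ℝ) / (x 1 * (4 + ‖x‖ ^ 2))

/-- The Finsler-Poincaré metric on the disk. -/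
def FP (x v : E2) : ℝ := 2 * ‖v‖ / (1 - ‖x‖ ^ 2) + 4 * (inner ℝ x v : ℝ) / (1 - ‖x‖ ^ 4)

/-! In the complex coordinate `z = x₁ + i x₂`, `h` is the Möbius map `z ↦ (2i - z) / (z + 2i)`,
so `Dh_x` is multiplication by `-4i / (z + 2i)²`; this carries the hyperbolic metric `|v| / x₂`
to the Poincaré metric `2|v| / (1 - |y|²)`. The remaining terms of both Finsler metrics are exact
forms: that of `F_P` is `d log ((1 + |y|²) / (1 - |y|²))`, that of `F_H` is
`d log ((4 + |x|²) / (4 x₂))`, and `h` carries the first potential to the second, so the chain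
rule matches them. -/

open Real

lemma E2.norm_sq_eq (x : E2) : ‖x‖ ^ 2 = x 0 ^ 2 + x 1 ^ 2 := by
  simp [EuclideanSpace.norm_sq_eq, Fin.sum_univ_two]

lemma E2.inner_eq (x y : E2) : inner ℝ x y = x 0 * y 0 + x 1 * y 1 := by
  simp [PiLp.inner_apply, Fin.sum_univ_two, mul_comm]

lemma isOpen_Hset : IsOpen Hset :=
  isOpen_lt continuous_const (EuclideanSpace.proj (1 : Fin 2)).continuous

lemma hHP_denom_pos {x : E2} (hx : x ∈ Hset) : 0 < ‖x‖ ^ 2 + 4 * x 1 + 4 := by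
  have : 0 < x 1 := hx
  positivity

lemma norm_hHP_sq (x : E2) :
    ‖hHP x‖ ^ 2 = ((4 - ‖x‖ ^ 2) ^ 2 + (4 * x 0) ^ 2) / (‖x‖ ^ 2 + 4 * x 1 + 4) ^ 2 := by
  rw [E2.norm_sq_eq (hHP x)]
  simp only [hHP, Matrix.cons_val_zero, Matrix.cons_val_one, Matrix.cons_val_fin_one]
  rw [div_pow, div_pow, add_div]

lemma one_sub_norm_hHP_sq {x : E2} (hx : x ∈ Hset) :
    1 - ‖hHP x‖ ^ 2 = 8 * x 1 / (‖x‖ ^ 2 + 4 * x 1 + 4) := by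
  have hD := (hHP_denom_pos hx).ne'
  rw [norm_hHP_sq]
  rw [E2.norm_sq_eq] at hD ⊢
  field_simp
  ring

lemma one_add_norm_hHP_sq {x : E2} (hx : x ∈ Hset) :
    1 + ‖hHP x‖ ^ 2 = 2 * (4 + ‖x‖ ^ 2) / (‖x‖ ^ 2 + 4 * x 1 + 4) := by
  have hD := (hHP_denom_pos hx).ne'
  rw [norm_hHP_sq]
  rw [E2.norm_sq_eq] at hD ⊢
  field_simp
  ring

lemma norm_hHP_lt_one {x : E2} (hx : x ∈ Hset) : ‖hHP x‖ < 1 := by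
  have h : 0 < 1 - ‖hHP x‖ ^ 2 := by
    have : 0 < x 1 := hx
    rw [one_sub_norm_hHP_sq hx]
    exact div_pos (by positivity) (hHP_denom_pos hx)
  exact (pow_lt_one_iff_of_nonneg (norm_nonneg _) two_ne_zero).mp (by linarith)

section Conformal

variable {F : Type*} [NormedAddCommGroup F] [NormedSpace ℝ F] (e : ℂ ≃ₗᵢ[ℝ] F) {g : ℂ → ℂ}
  {g' : ℂ} {x : F}

theorem HasDerivAt.hasFDerivAt_conj (hg : HasDerivAt g g' (e.symm x)) :
    HasFDerivAt (e ∘ g ∘ e.symm) ((e : ℂ →L[ℝ] F).comp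
      (((ContinuousLinearMap.smulRight (1 : ℂ →L[ℂ] ℂ) g').restrictScalars ℝ).comp
        (e.symm : F →L[ℝ] ℂ))) x :=
  e.toContinuousLinearEquiv.hasFDerivAt.comp x
    ((hg.hasFDerivAt.restrictScalars ℝ).comp x e.symm.toContinuousLinearEquiv.hasFDerivAt)

theorem HasDerivAt.norm_fderiv_conj_apply (hg : HasDerivAt g g' (e.symm x)) (v : F) :
    ‖fderiv ℝ (e ∘ g ∘ e.symm) x v‖ = ‖g'‖ * ‖v‖ := by
  rw [(hg.hasFDerivAt_conj e).fderiv]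
  simp [mul_comm]

end Conformal

section HalfPlaneToDisk

open Complex

def halfPlaneToDisk (z : ℂ) : ℂ := (2 * I - z) / (z + 2 * I)

lemma hasDerivAt_halfPlaneToDisk {z : ℂ} (hz : z + 2 * I ≠ 0) :
    HasDerivAt halfPlaneToDisk (-4 * I / (z + 2 * I) ^ 2) z := by
  refine (((hasDerivAt_id' z).const_sub (2 * I)).div ((hasDerivAt_id' z).add_const (2 * I))
    hz).congr_deriv ?_
  ring

lemma hHP_eq_conj_halfPlaneToDisk :
    hHP = orthonormalBasisOneI.repr ∘ halfPlaneToDisk ∘ orthonormalBasisOneI.repr.symm := by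
  funext x
  ext i
  have hD : x 0 ^ 2 + x 1 ^ 2 + 4 * x 1 + 4 = x 0 * x 0 + (x 1 + 2) * (x 1 + 2) := by ring
  fin_cases i <;>
    simp only [Function.comp_apply, hHP, halfPlaneToDisk, orthonormalBasisOneI_repr_apply,
      orthonormalBasisOneI_repr_symm_apply, E2.norm_sq_eq, hD, Fin.zero_eta, Fin.mk_one,
      Matrix.cons_val_zero, Matrix.cons_val_one, Matrix.cons_val_fin_one, div_re, div_im,
      normSq_apply, add_re, add_im, sub_re, sub_im, mul_re, mul_im, ofReal_re, ofReal_im, I_re, I_im,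
      re_ofNat, im_ofNat] <;>
    ring

lemma norm_repr_symm_add_two_I_sq (x : E2) :
    ‖orthonormalBasisOneI.repr.symm x + 2 * I‖ ^ 2 = ‖x‖ ^ 2 + 4 * x 1 + 4 := by
  rw [Complex.sq_norm, normSq_apply, E2.norm_sq_eq]
  simp only [orthonormalBasisOneI_repr_symm_apply, add_re, add_im, mul_re, mul_im, ofReal_re,
    ofReal_im, I_re, I_im, re_ofNat, im_ofNat]
  ring

lemma hasDerivAt_halfPlaneToDisk_repr_symm {x : E2} (hx : x ∈ Hset) :
    HasDerivAt halfPlaneToDisk (-4 * I / (orthonormalBasisOneI.repr.symm x + 2 * I) ^ 2)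
      (orthonormalBasisOneI.repr.symm x) := by
  apply hasDerivAt_halfPlaneToDisk
  intro h
  have := norm_repr_symm_add_two_I_sq x
  rw [h, norm_zero] at this
  linarith [hHP_denom_pos hx]

lemma differentiableAt_hHP {x : E2} (hx : x ∈ Hset) : DifferentiableAt ℝ hHP x := by
  rw [hHP_eq_conj_halfPlaneToDisk]
  exact ((hasDerivAt_halfPlaneToDisk_repr_symm hx).hasFDerivAt_conj _).differentiableAt

lemma norm_fderiv_hHP_apply {x : E2} (hx : x ∈ Hset) (v : E2) :
    ‖fderiv ℝ hHP x v‖ = 4 / (‖x‖ ^ 2 + 4 * x 1 + 4) * ‖v‖ := by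
  rw [hHP_eq_conj_halfPlaneToDisk,
    (hasDerivAt_halfPlaneToDisk_repr_symm hx).norm_fderiv_conj_apply, norm_div, norm_pow,
    norm_repr_symm_add_two_I_sq]
  simp

end HalfPlaneToDisk

def poincarePotential {F : Type*} [NormedAddCommGroup F] (y : F) : ℝ :=
  log (1 + ‖y‖ ^ 2) - log (1 - ‖y‖ ^ 2)

lemma hasFDerivAt_poincarePotential {F : Type*} [NormedAddCommGroup F] [InnerProductSpace ℝ F]
    {y : F} (hy : ‖y‖ < 1) :
    HasFDerivAt poincarePotential ((4 / (1 - ‖y‖ ^ 4)) • innerSL ℝ y) y := by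
  have hsq : ‖y‖ ^ 2 < 1 := by nlinarith [norm_nonneg y]
  have hn := (hasStrictFDerivAt_norm_sq y).hasFDerivAt
  refine (((hn.const_add 1).log (by positivity)).sub
    ((hn.const_sub 1).log (by linarith))).congr_fderiv ?_
  ext w
  have h4 : 1 - ‖y‖ ^ 4 = (1 + ‖y‖ ^ 2) * (1 - ‖y‖ ^ 2) := by ring
  have : 1 - ‖y‖ ^ 2 ≠ 0 := by linarith
  simp only [smul_neg, sub_neg_eq_add, add_apply, smul_apply, coe_innerSL_apply, nsmul_eq_mul,
    Nat.cast_ofNat, smul_eq_mul, h4]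
  field_simp
  ring

lemma FP_eq_add_fderiv_poincarePotential {y : E2} (hy : ‖y‖ < 1) (w : E2) :
    FP y w = 2 * ‖w‖ / (1 - ‖y‖ ^ 2) + fderiv ℝ poincarePotential y w := by
  rw [FP, (hasFDerivAt_poincarePotential hy).fderiv]
  simp [mul_div_right_comm]

def halfPlanePotential (x : E2) : ℝ := log (4 + ‖x‖ ^ 2) - log (4 * x 1)

lemma hasFDerivAt_halfPlanePotential {x : E2} (hx : x ∈ Hset) :
    HasFDerivAt halfPlanePotential
      ((2 / (4 + ‖x‖ ^ 2)) • innerSL ℝ x - (x 1)⁻¹ • EuclideanSpace.proj (1 : Fin 2)) x := by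
  have h1 : 0 < x 1 := hx
  have hn := (hasStrictFDerivAt_norm_sq x).hasFDerivAt
  have hp := ((EuclideanSpace.proj (1 : Fin 2) : E2 →L[ℝ] ℝ).hasFDerivAt (x := x)).const_mul 4
  refine (((hn.const_add 4).log (by positivity)).sub (hp.log (by positivity))).congr_fderiv ?_
  ext w
  simp only [sub_apply, smul_apply, PiLp.proj_apply,
    coe_innerSL_apply, nsmul_eq_mul, Nat.cast_ofNat, smul_eq_mul]
  field_simp

lemma FH_eq_add_fderiv_halfPlanePotential {x : E2} (hx : x ∈ Hset) (v : E2) :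
    FH x v = ‖v‖ / x 1 + fderiv ℝ halfPlanePotential x v := by
  have h1 : 0 < x 1 := hx
  rw [FH, (hasFDerivAt_halfPlanePotential hx).fderiv]
  simp only [wH, E2.inner_eq, E2.norm_sq_eq, Matrix.cons_val_zero, Matrix.cons_val_one,
    Matrix.cons_val_fin_one, sub_apply, smul_apply,
    coe_innerSL_apply, smul_eq_mul, PiLp.proj_apply]
  field_simp
  ring

lemma poincarePotential_hHP {x : E2} (hx : x ∈ Hset) :
    poincarePotential (hHP x) = halfPlanePotential x := by
  have h1 : 0 < x 1 := hx
  have hD := hHP_denom_pos hx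
  rw [poincarePotential, halfPlanePotential, one_add_norm_hHP_sq hx, one_sub_norm_hHP_sq hx,
    ← log_div (by positivity) (by positivity), ← log_div (by positivity) (by positivity)]
  congr 1
  field_simp
  ring

theorem hHP_isometry (x : E2) (hx : x ∈ Hset) (v : E2) :
    FH x v = FP (hHP x) (fderiv ℝ hHP x v) := by
  have h1 : 0 < x 1 := hx
  have hD := hHP_denom_pos hx
  have hpot : fderiv ℝ halfPlanePotential x =
      (fderiv ℝ poincarePotential (hHP x)).comp (fderiv ℝ hHP x) := by
    rw [← fderiv_comp x (hasFDerivAt_poincarePotential (norm_hHP_lt_one hx)).differentiableAt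
      (differentiableAt_hHP hx)]
    exact (Filter.eventuallyEq_of_mem (isOpen_Hset.mem_nhds hx)
      fun y hy => (poincarePotential_hHP hy).symm).fderiv_eq
  rw [FH_eq_add_fderiv_halfPlanePotential hx,
    FP_eq_add_fderiv_poincarePotential (norm_hHP_lt_one hx), hpot,
    ContinuousLinearMap.comp_apply, norm_fderiv_hHP_apply hx, one_sub_norm_hHP_sq hx]
  congr 1
  field_simp
  ring
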